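/- Fix a connected graph G, a list assignment L for G, and a vertex v ∈ V(G) with |L(v)| > d(v). If G − v is L-swappable (with respect to the restriction of L to G − v), then G is L-swappable. -/

import Mathlib

noncomputable section
open scoped Classical

/-- `φ` is a proper `L`-coloring of `G`: every vertex gets a color from its list,
and adjacent vertices get distinct colors. -/
def IsLColoring {V : Type*} (G : SimpleGraph V) (L : V → Finset ℕ) (φ : V → ℕ) : Prop :=
  (∀ v, φ v ∈ L v) ∧ ∀ ⦃u w⦄, G.Adj u w → φ u ≠ φ w

/-- `KempeChain G φ a b x y` : `y` lies in the `a,b`-component of `x`, i.e. `y` is reachable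
from `x` in the subgraph induced by the vertices colored `a` or `b` by `φ`. -/
def KempeChain {V : Type*} (G : SimpleGraph V) (φ : V → ℕ) (a b : ℕ) : V → V → Prop :=
  Relation.ReflTransGen fun u w => G.Adj u w ∧ (φ u = a ∨ φ u = b) ∧ (φ w = a ∨ φ w = b)

/-- The coloring obtained from `φ` by performing an `(a,b)`-Kempe swap on the
`a,b`-component containing `x`. -/
def kempeSwap {V : Type*} (G : SimpleGraph V) (φ : V → ℕ) (a b : ℕ) (x : V) : V → ℕ := fun w =>
  if KempeChain G φ a b x w then (if φ w = a then b else if φ w = b then a else φ w) else φ w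

/-- `ψ` is obtained from `φ` by a single `L`-valid Kempe swap. -/
def KempeStep {V : Type*} (G : SimpleGraph V) (L : V → Finset ℕ) (φ ψ : V → ℕ) : Prop :=
  ∃ a b x, a ≠ b ∧ (φ x = a ∨ φ x = b) ∧ ψ = kempeSwap G φ a b x ∧ IsLColoring G L ψ

/-- Two colorings are `L`-equivalent if one can be transformed into the other by a
sequence of `L`-valid Kempe swaps. -/
def LEquiv {V : Type*} (G : SimpleGraph V) (L : V → Finset ℕ) (φ ψ : V → ℕ) : Prop :=
  Relation.ReflTransGen (KempeStep G L) φ ψ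

/-- `G` is `L`-swappable: every two of its `L`-colorings are `L`-equivalent. -/
def LSwappable {V : Type*} (G : SimpleGraph V) (L : V → Finset ℕ) : Prop :=
  ∀ φ ψ, IsLColoring G L φ → IsLColoring G L ψ → LEquiv G L φ ψ

/-!
Lift a sequence of Kempe swaps of `G - v` to `G` one swap at a time, keeping the colorings of
`G` and `G - v` equal off `v`, and recolor `v` at the end. An `(a, b)`-swap of `G - v` lifts
verbatim unless `v` links two `(a, b)`-chains of `G - v` or would be swapped to a color outside
`L(v)`. Since `|L(v)| > d(v)`, either some color of `L(v) \ {a, b}` is free at `v`, and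
recoloring `v` with it detaches `v` from all `(a, b)`-chains, or `v` has at most one neighbour
colored `a` or `b` and then `a, b ∈ L(v)`; in both cases the swap lifts.
-/

theorem Finset.card_filter_mem_lt_card_inter {α β : Type*} [DecidableEq β] {N : Finset α}
    {A P : Finset β} (f : α → β) (hN : N.card < A.card)
    (hcover : ∀ c ∈ A, c ∉ P → ∃ u ∈ N, f u = c) :
    (N.filter (f · ∈ P)).card < (A ∩ P).card := by
  have hsub : A \ P ⊆ (N.filter (f · ∉ P)).image f := by
    intro c hc
    rw [Finset.mem_sdiff] at hc
    obtain ⟨u, hu, rfl⟩ := hcover c hc.1 hc.2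
    exact Finset.mem_image_of_mem f (Finset.mem_filter.2 ⟨hu, hc.2⟩)
  have hsplit := Finset.card_filter_add_card_filter_not (s := N) (f · ∈ P)
  have := calc A.card - (P ∩ A).card
      _ = (A \ P).card := Finset.card_sdiff.symm
      _ ≤ ((N.filter (f · ∉ P)).image f).card := Finset.card_le_card hsub
      _ ≤ (N.filter (f · ∉ P)).card := Finset.card_image_le
  rw [Finset.inter_comm] at this
  omega

section KempeSwaps

variable {V : Type*} {G : SimpleGraph V} {L : V → Finset ℕ} {φ : V → ℕ} {a b : ℕ}

/-- `KempeChain G φ a b` is the reflexive-transitive closure of this relation. -/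
def KempeAdj (G : SimpleGraph V) (φ : V → ℕ) (a b : ℕ) (u w : V) : Prop :=
  G.Adj u w ∧ (φ u = a ∨ φ u = b) ∧ (φ w = a ∨ φ w = b)

theorem KempeAdj.symm {u w : V} (h : KempeAdj G φ a b u w) : KempeAdj G φ a b w u :=
  ⟨h.1.symm, h.2.2, h.2.1⟩

theorem kempeSwap_apply (x w : V) :
    kempeSwap G φ a b x w = if KempeChain G φ a b x w then Equiv.swap a b (φ w) else φ w := by
  simp only [kempeSwap, Equiv.swap_apply_def]

theorem kempeSwap_apply_of_ne {x w : V} (ha : φ w ≠ a) (hb : φ w ≠ b) :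
    kempeSwap G φ a b x w = φ w := by
  rw [kempeSwap_apply, Equiv.swap_apply_of_ne_of_ne ha hb, ite_self]

theorem kempeSwap_adj_ne (hφ : ∀ ⦃u w⦄, G.Adj u w → φ u ≠ φ w) (x : V) ⦃u w : V⦄
    (huw : G.Adj u w) : kempeSwap G φ a b x u ≠ kempeSwap G φ a b x w := by
  have boundary : ∀ u w, G.Adj u w → KempeChain G φ a b x u → ¬KempeChain G φ a b x w →
      Equiv.swap a b (φ u) ≠ φ w := by
    intro u w huw hu hw
    by_cases hua : φ u = a ∨ φ u = b
    · by_cases hwa : φ w = a ∨ φ w = b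
      · exact absurd (hu.tail ⟨huw, hua, hwa⟩) hw
      · rw [Equiv.swap_apply_def]
        split_ifs <;> omega
    · rw [Equiv.swap_apply_of_ne_of_ne (by omega) (by omega)]
      exact hφ huw
  rw [kempeSwap_apply, kempeSwap_apply]
  split_ifs with hu hw hw
  · exact (Equiv.swap a b).injective.ne (hφ huw)
  · exact boundary u w huw hu hw
  · exact (boundary w u huw.symm hw hu).symm
  · exact hφ huw

theorem IsLColoring.induce (s : Set V) (hφ : IsLColoring G L φ) :
    IsLColoring (G.induce s) (fun w => L w) (fun w => φ w) :=
  ⟨fun w => hφ.1 w, fun _ _ h => hφ.2 h⟩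

theorem IsLColoring.update (hφ : IsLColoring G L φ) {v : V} {c : ℕ} (hc : c ∈ L v)
    (hfree : ∀ u, G.Adj v u → φ u ≠ c) : IsLColoring G L (Function.update φ v c) := by
  refine ⟨fun w => ?_, fun u w huw => ?_⟩
  · rcases eq_or_ne w v with rfl | hw
    · simpa using hc
    · simpa [hw] using hφ.1 w
  · rcases eq_or_ne u v with rfl | hu
    · simpa [huw.ne'] using (hfree w huw).symm
    rcases eq_or_ne w v with rfl | hw
    · simpa [hu] using hfree u huw.symm
    · simpa [hu, hw] using hφ.2 huw

theorem LEquiv.isLColoring {ψ : V → ℕ} (h : LEquiv G L φ ψ) (hφ : IsLColoring G L φ) :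
    IsLColoring G L ψ := by
  induction h with
  | refl => exact hφ
  | tail _ hstep _ => obtain ⟨_, _, _, _, _, _, hcol⟩ := hstep; exact hcol

/-- Recoloring a single vertex with a color free in its neighbourhood is the Kempe swap of
the one-vertex chain. -/
theorem lequiv_update (hφ : IsLColoring G L φ) {v : V} {c : ℕ} (hc : c ∈ L v)
    (hfree : ∀ u, G.Adj v u → φ u ≠ c) : LEquiv G L φ (Function.update φ v c) := by
  rcases eq_or_ne c (φ v) with rfl | hne
  · rw [Function.update_eq_self]; exact .refl
  have hchain : ∀ w, KempeChain G φ (φ v) c v w → w = v := by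
    intro w h
    rcases Relation.ReflTransGen.cases_head h with rfl | ⟨u, ⟨hvu, -, hu⟩, -⟩
    · rfl
    · exact (hu.elim (hφ.2 hvu).symm (hfree u hvu)).elim
  have hswap : kempeSwap G φ (φ v) c v = Function.update φ v c := by
    funext w
    rcases eq_or_ne w v with rfl | hw
    · have hrefl : KempeChain G φ (φ w) c w w := .refl
      rw [kempeSwap_apply, if_pos hrefl, Equiv.swap_apply_left, Function.update_self]
    · rw [kempeSwap_apply, if_neg (mt (hchain w) hw), Function.update_of_ne hw]
  exact .single ⟨φ v, c, v, hne.symm, .inl rfl, hswap.symm, hφ.update hc hfree⟩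

/-- A chain entering `v` through its only `(a, b)`-edge must leave through the same edge, so it
can skip `v`. -/
theorem kempeChain_induce_compl_iff {v : V} (hv : {u | KempeAdj G φ a b v u}.Subsingleton)
    (x w : ({v}ᶜ : Set V)) :
    KempeChain G φ a b x w ↔ KempeChain (G.induce {v}ᶜ) (fun u => φ u) a b x w := by
  refine ⟨fun h => ?_, fun h => Relation.ReflTransGen.lift Subtype.val (fun _ _ h => h) _ _ h⟩
  suffices ∀ y, KempeChain G φ a b x y →
      (∀ hy : y ≠ v, KempeChain (G.induce {v}ᶜ) (fun u => φ u) a b x ⟨y, hy⟩) ∧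
      (y = v → ∀ u (hu : KempeAdj G φ a b v u),
        KempeChain (G.induce {v}ᶜ) (fun u => φ u) a b x ⟨u, hu.1.ne'⟩) from (this w h).1 w.2
  intro y hy
  induction hy with
  | refl => exact ⟨fun _ => .refl, fun h => absurd h x.2⟩
  | @tail p q _ hpq ih =>
    refine ⟨fun hq => ?_, ?_⟩
    · rcases eq_or_ne p v with rfl | hp
      · exact ih.2 rfl q hpq
      · exact (ih.1 hp).tail hpq
    · rintro rfl u hu
      obtain rfl : u = p := hv hu (show KempeAdj G φ a b p q from hpq).symm
      exact ih.1 hpq.1.ne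

theorem kempeStep_of_kempeStep_induce_compl {v : V} (hφ : IsLColoring G L φ)
    {x : ({v}ᶜ : Set V)} (hab : a ≠ b) (hx : φ x = a ∨ φ x = b)
    (hcol : IsLColoring (G.induce {v}ᶜ) (fun w => L w)
      (kempeSwap (G.induce {v}ᶜ) (fun w => φ w) a b x))
    (hv : {u | KempeAdj G φ a b v u}.Subsingleton) (hvL : kempeSwap G φ a b x v ∈ L v) :
    KempeStep G L φ (kempeSwap G φ a b x) ∧
      (fun w : ({v}ᶜ : Set V) => kempeSwap G φ a b x w) =
        kempeSwap (G.induce {v}ᶜ) (fun w => φ w) a b x := by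
  have hres : (fun w : ({v}ᶜ : Set V) => kempeSwap G φ a b x w) =
      kempeSwap (G.induce {v}ᶜ) (fun w => φ w) a b x := by
    funext w
    simp only [kempeSwap, kempeChain_induce_compl_iff hv]
  refine ⟨⟨a, b, x, hab, hx, rfl, fun w => ?_, kempeSwap_adj_ne hφ.2 x⟩, hres⟩
  rcases eq_or_ne w v with rfl | hw
  · exact hvL
  · exact congrFun hres ⟨w, hw⟩ ▸ hcol.1 ⟨w, hw⟩

theorem kempeAdj_subsingleton_of_forall_used {v : V} [Fintype (G.neighborSet v)]
    (hdeg : G.degree v < (L v).card)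
    (hused : ∀ c ∈ L v, c ≠ a → c ≠ b → ∃ u, G.Adj v u ∧ φ u = c) :
    {u | KempeAdj G φ a b v u}.Subsingleton ∧
      ({u | KempeAdj G φ a b v u}.Nonempty → a ∈ L v ∧ b ∈ L v) := by
  set S := (G.neighborFinset v).filter (φ · ∈ ({a, b} : Finset ℕ))
  have hlt : S.card < (L v ∩ {a, b}).card := by
    refine Finset.card_filter_mem_lt_card_inter φ hdeg fun c hc hcab => ?_
    obtain ⟨u, hvu, rfl⟩ := hused c hc (by simp_all) (by simp_all)
    exact ⟨u, (G.mem_neighborFinset v u).2 hvu, rfl⟩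
  have hsub : {u | KempeAdj G φ a b v u} ⊆ S := fun u hu => by
    simpa [S, hu.1] using hu.2.2
  have hle : (L v ∩ {a, b}).card ≤ 2 :=
    (Finset.card_le_card Finset.inter_subset_right).trans Finset.card_le_two
  refine ⟨Set.Subsingleton.anti (Finset.card_le_one.1 (by omega)) hsub, fun ⟨u, hu⟩ => ?_⟩
  have hS : 0 < S.card := Finset.card_pos.2 ⟨u, hsub hu⟩
  have hpair : L v ∩ {a, b} = {a, b} :=
    Finset.eq_of_subset_of_card_le Finset.inter_subset_right
      (Finset.card_le_two.trans (by omega))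
  have hpair' : {a, b} ⊆ L v := hpair ▸ Finset.inter_subset_left
  exact ⟨hpair' (by simp), hpair' (by simp)⟩

theorem exists_lequiv_restrict_eq_of_kempeStep {v : V} [Fintype (G.neighborSet v)]
    (hdeg : G.degree v < (L v).card) (hφ : IsLColoring G L φ) {ψ' : ({v}ᶜ : Set V) → ℕ}
    (hstep : KempeStep (G.induce {v}ᶜ) (fun w => L w) (fun w => φ w) ψ') :
    ∃ χ, LEquiv G L φ χ ∧ (fun w : ({v}ᶜ : Set V) => χ w) = ψ' := by
  obtain ⟨a, b, x, hab, hx, rfl, hcol⟩ := hstep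
  by_cases hfree : ∃ c ∈ L v, c ≠ a ∧ c ≠ b ∧ ∀ u, G.Adj v u → φ u ≠ c
  · -- once `v` is recolored with `c ∉ {a, b}`, no `(a, b)`-chain meets `v`
    obtain ⟨c, hc, hca, hcb, hcfree⟩ := hfree
    have hrestr : (fun w : ({v}ᶜ : Set V) => Function.update φ v c w) =
        fun w : ({v}ᶜ : Set V) => φ w :=
      funext fun w => Function.update_of_ne w.2 _ _
    have hφv : Function.update φ v c v = c := Function.update_self ..
    obtain ⟨hstep, hres⟩ := kempeStep_of_kempeStep_induce_compl (hφ.update hc hcfree) hab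
      (by rwa [Function.update_of_ne x.2]) (by rwa [hrestr])
      (fun u hu => by simp_all [KempeAdj])
      (by rwa [kempeSwap_apply_of_ne (by rwa [hφv]) (by rwa [hφv]), hφv])
    exact ⟨_, (lequiv_update hφ hc hcfree).trans (.single hstep), hres.trans (by rw [hrestr])⟩
  · push Not at hfree
    obtain ⟨hsing, hpair⟩ := kempeAdj_subsingleton_of_forall_used hdeg hfree
    have hvL : kempeSwap G φ a b x v ∈ L v := by
      rw [kempeSwap_apply]
      split_ifs with hvx
      · rcases Relation.ReflTransGen.cases_tail hvx with hxv | ⟨p, -, hpv⟩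
        · exact absurd hxv.symm x.2
        obtain ⟨haL, hbL⟩ := hpair ⟨p, KempeAdj.symm hpv⟩
        rcases hpv.2.2 with hva | hvb
        · rwa [hva, Equiv.swap_apply_left]
        · rwa [hvb, Equiv.swap_apply_right]
      · exact hφ.1 v
    obtain ⟨hstep, hres⟩ := kempeStep_of_kempeStep_induce_compl hφ hab hx hcol hsing hvL
    exact ⟨_, .single hstep, hres⟩

theorem exists_lequiv_restrict_eq {v : V} [Fintype (G.neighborSet v)]
    (hdeg : G.degree v < (L v).card) (hφ : IsLColoring G L φ) {ψ' : ({v}ᶜ : Set V) → ℕ}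
    (h : LEquiv (G.induce {v}ᶜ) (fun w => L w) (fun w => φ w) ψ') :
    ∃ χ, LEquiv G L φ χ ∧ (fun w : ({v}ᶜ : Set V) => χ w) = ψ' := by
  induction h with
  | refl => exact ⟨φ, .refl, rfl⟩
  | tail _ hstep ih =>
    obtain ⟨χ, hφχ, rfl⟩ := ih
    obtain ⟨χ', hχχ', rfl⟩ :=
      exists_lequiv_restrict_eq_of_kempeStep hdeg (hφχ.isLColoring hφ) hstep
    exact ⟨χ', hφχ.trans hχχ', rfl⟩

theorem lequiv_of_eqOn_compl_singleton {v : V} {ψ : V → ℕ} (hφ : IsLColoring G L φ)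
    (hψ : IsLColoring G L ψ) (h : ∀ w, w ≠ v → φ w = ψ w) : LEquiv G L φ ψ := by
  have hupdate : Function.update φ v (ψ v) = ψ := by
    funext w
    rcases eq_or_ne w v with rfl | hw
    · exact Function.update_self ..
    · rw [Function.update_of_ne hw, h w hw]
  exact hupdate ▸ lequiv_update hφ (hψ.1 v) fun u hvu => h u hvu.ne' ▸ (hψ.2 hvu).symm

end KempeSwaps

theorem lemma4_general {V : Type*} [Fintype V] (G : SimpleGraph V)
    (L : V → Finset ℕ) (v : V) (hv : (G.neighborSet v).ncard < (L v).card)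
    (hGv : LSwappable (G.induce ({v}ᶜ : Set V)) fun x => L ↑x) :
    LSwappable G L := by
  intro φ ψ hφ hψ
  have hdeg : G.degree v < (L v).card := (Set.ncard_eq_toFinset_card' _).symm.trans_lt hv
  obtain ⟨χ, hφχ, hχψ⟩ :=
    exists_lequiv_restrict_eq hdeg hφ (hGv _ _ (hφ.induce _) (hψ.induce _))
  exact hφχ.trans <| lequiv_of_eqOn_compl_singleton (hφχ.isLColoring hφ) hψ
    fun w hw => congrFun hχψ ⟨w, hw⟩

/-- **Lemma 4.** Fix a connected graph `G`, a list assignment `L` for `G`, and `v ∈ V(G)`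
with `|L(v)| > d(v)`.  If `G − v` is `L`-swappable (with respect to the restriction of `L`),
then `G` is `L`-swappable. -/
theorem lemma4 {V : Type*} [Fintype V] (G : SimpleGraph V) (hconn : G.Connected)
    (L : V → Finset ℕ) (v : V) (hv : (G.neighborSet v).ncard < (L v).card)
    (hGv : LSwappable (G.induce ({v}ᶜ : Set V)) fun x => L ↑x) :
    LSwappable G L :=
  lemma4_general G L v hv hGv
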